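/- If f(q) is a formal power series solution of 2θ³f − 2f·θ²f + 3(θf)² = 0 (θ = q d/dq) with f(0) = 1 and coefficient of q equal to −24, then f = E₂, i.e., the coefficient of q^n in f is −24·σ₁(n) for all n ≥ 1. -/

import Mathlib

open PowerSeries

/-- The derivation `θ = q·d/dq` on formal power series. -/
noncomputable def theta (f : PowerSeries ℂ) : PowerSeries ℂ :=
  PowerSeries.mk fun n => (n : ℂ) * PowerSeries.coeff n f


open Finset

/-- Quadruples (a,b,x,y) of positive naturals with a*x + b*y = n. -/
def Squad (n : ℕ) : Finset (ℕ × ℕ × ℕ × ℕ) :=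
  (Finset.range (n+1) ×ˢ (Finset.range (n+1) ×ˢ (Finset.range (n+1) ×ˢ Finset.range (n+1)))).filter
    fun p => 0 < p.1 ∧ 0 < p.2.1 ∧ 0 < p.2.2.1 ∧ 0 < p.2.2.2 ∧
      p.1 * p.2.2.1 + p.2.1 * p.2.2.2 = n

lemma mem_Squad {n : ℕ} {p : ℕ × ℕ × ℕ × ℕ} :
    p ∈ Squad n ↔ 0 < p.1 ∧ 0 < p.2.1 ∧ 0 < p.2.2.1 ∧ 0 < p.2.2.2 ∧
      p.1 * p.2.2.1 + p.2.1 * p.2.2.2 = n := by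
  obtain ⟨a, b, x, y⟩ := p
  simp only [Squad, mem_filter, mem_product, mem_range]
  constructor
  · rintro ⟨-, h⟩; exact h
  · rintro ⟨ha, hb, hx, hy, he⟩
    refine ⟨⟨?_, ?_, ?_, ?_⟩, ha, hb, hx, hy, he⟩
    · have h1 : a ≤ a * x := Nat.le_mul_of_pos_right a hx
      have h2 : 0 ≤ b * y := Nat.zero_le _
      omega
    · have h1 : b ≤ b * y := Nat.le_mul_of_pos_right b hy
      have h2 : 0 ≤ a * x := Nat.zero_le _
      omega
    · have h1 : x ≤ a * x := Nat.le_mul_of_pos_left x ha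
      have h2 : 0 ≤ b * y := Nat.zero_le _
      omega
    · have h1 : y ≤ b * y := Nat.le_mul_of_pos_left y hb
      have h2 : 0 ≤ a * x := Nat.zero_le _
      omega

/-- region y < x -/
def Rgt (n : ℕ) : Finset (ℕ × ℕ × ℕ × ℕ) := (Squad n).filter fun p => p.2.2.2 < p.2.2.1
/-- region x < y -/
def Rlt (n : ℕ) : Finset (ℕ × ℕ × ℕ × ℕ) := (Squad n).filter fun p => p.2.2.1 < p.2.2.2
/-- diagonal x = y -/
def Rdg (n : ℕ) : Finset (ℕ × ℕ × ℕ × ℕ) := (Squad n).filter fun p => p.2.2.1 = p.2.2.2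
/-- region a < b -/
def Rab (n : ℕ) : Finset (ℕ × ℕ × ℕ × ℕ) := (Squad n).filter fun p => p.1 < p.2.1

lemma sum_split (n : ℕ) (f : ℕ × ℕ × ℕ × ℕ → ℂ) :
    ∑ p ∈ Squad n, f p = (∑ p ∈ Rgt n, f p) + (∑ p ∈ Rdg n, f p) + (∑ p ∈ Rlt n, f p) := by
  rw [← Finset.sum_filter_add_sum_filter_not (Squad n) (fun p => p.2.2.2 < p.2.2.1) f]
  rw [← Finset.sum_filter_add_sum_filter_not
    ((Squad n).filter fun p => ¬ p.2.2.2 < p.2.2.1) (fun p => p.2.2.1 = p.2.2.2) f]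
  rw [Finset.filter_filter, Finset.filter_filter]
  have h1 : ((Squad n).filter fun p => ¬p.2.2.2 < p.2.2.1 ∧ p.2.2.1 = p.2.2.2) = Rdg n := by
    apply Finset.filter_congr; intro p _; omega
  have h2 : ((Squad n).filter fun p => ¬p.2.2.2 < p.2.2.1 ∧ ¬p.2.2.1 = p.2.2.2) = Rlt n := by
    apply Finset.filter_congr; intro p _; omega
  rw [h1, h2, Rgt, add_assoc]

lemma sum_tau (n : ℕ) (f : ℕ → ℕ → ℕ → ℕ → ℂ) :
    ∑ p ∈ Rlt n, f p.1 p.2.1 p.2.2.1 p.2.2.2 = ∑ p ∈ Rgt n, f p.2.1 p.1 p.2.2.2 p.2.2.1 := by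
  refine Finset.sum_nbij' (fun p => (p.2.1, p.1, p.2.2.2, p.2.2.1))
    (fun p => (p.2.1, p.1, p.2.2.2, p.2.2.1)) ?_ ?_ ?_ ?_ ?_
  · rintro ⟨a, b, x, y⟩ hp
    simp only [Rlt, Rgt, mem_filter, mem_Squad] at hp ⊢
    obtain ⟨⟨ha, hb, hx, hy, he⟩, hr⟩ := hp
    exact ⟨⟨hb, ha, hy, hx, by rw [← he]; ring⟩, hr⟩
  · rintro ⟨a, b, x, y⟩ hp
    simp only [Rlt, Rgt, mem_filter, mem_Squad] at hp ⊢
    obtain ⟨⟨ha, hb, hx, hy, he⟩, hr⟩ := hp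
    exact ⟨⟨hb, ha, hy, hx, by rw [← he]; ring⟩, hr⟩
  · rintro ⟨a, b, x, y⟩ _; rfl
  · rintro ⟨a, b, x, y⟩ _; rfl
  · rintro ⟨a, b, x, y⟩ _; rfl

lemma sum_s1 (n : ℕ) (f : ℕ → ℕ → ℕ → ℕ → ℂ) :
    ∑ p ∈ Squad n, f p.2.2.1 p.2.1 p.1 p.2.2.2 = ∑ p ∈ Squad n, f p.1 p.2.1 p.2.2.1 p.2.2.2 := by
  refine Finset.sum_nbij' (fun p => (p.2.2.1, p.2.1, p.1, p.2.2.2))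
    (fun p => (p.2.2.1, p.2.1, p.1, p.2.2.2)) ?_ ?_ ?_ ?_ ?_
  · rintro ⟨a, b, x, y⟩ hp
    simp only [mem_Squad] at hp ⊢
    obtain ⟨ha, hb, hx, hy, he⟩ := hp
    exact ⟨hx, hb, ha, hy, by rw [← he]; ring⟩
  · rintro ⟨a, b, x, y⟩ hp
    simp only [mem_Squad] at hp ⊢
    obtain ⟨ha, hb, hx, hy, he⟩ := hp
    exact ⟨hx, hb, ha, hy, by rw [← he]; ring⟩
  · rintro ⟨a, b, x, y⟩ _; rfl
  · rintro ⟨a, b, x, y⟩ _; rfl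
  · rintro ⟨a, b, x, y⟩ _; rfl

lemma sum_rho (n : ℕ) (f : ℕ → ℕ → ℕ → ℕ → ℂ) :
    ∑ p ∈ Rab n, f p.1 p.2.1 p.2.2.1 p.2.2.2 = ∑ p ∈ Rgt n, f p.2.2.2 p.2.2.1 p.2.1 p.1 := by
  refine Finset.sum_nbij' (fun p => (p.2.2.2, p.2.2.1, p.2.1, p.1))
    (fun p => (p.2.2.2, p.2.2.1, p.2.1, p.1)) ?_ ?_ ?_ ?_ ?_
  · rintro ⟨a, b, x, y⟩ hp
    simp only [Rab, Rgt, mem_filter, mem_Squad] at hp ⊢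
    obtain ⟨⟨ha, hb, hx, hy, he⟩, hr⟩ := hp
    exact ⟨⟨hy, hx, hb, ha, by rw [← he]; ring⟩, hr⟩
  · rintro ⟨a, b, x, y⟩ hp
    simp only [Rab, Rgt, mem_filter, mem_Squad] at hp ⊢
    obtain ⟨⟨ha, hb, hx, hy, he⟩, hr⟩ := hp
    exact ⟨⟨hy, hx, hb, ha, by rw [← he]; ring⟩, hr⟩
  · rintro ⟨a, b, x, y⟩ _; rfl
  · rintro ⟨a, b, x, y⟩ _; rfl
  · rintro ⟨a, b, x, y⟩ _; rfl

lemma sum_euclid (n : ℕ) (f : ℕ → ℕ → ℕ → ℕ → ℂ) :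
    ∑ p ∈ Rgt n, f p.1 (p.1 + p.2.1) (p.2.2.1 - p.2.2.2) p.2.2.2
      = ∑ p ∈ Rab n, f p.1 p.2.1 p.2.2.1 p.2.2.2 := by
  refine Finset.sum_nbij' (fun p => (p.1, p.1 + p.2.1, p.2.2.1 - p.2.2.2, p.2.2.2))
    (fun p => (p.1, p.2.1 - p.1, p.2.2.1 + p.2.2.2, p.2.2.2)) ?_ ?_ ?_ ?_ ?_
  · rintro ⟨a, b, x, y⟩ hp
    simp only [Rab, Rgt, mem_filter, mem_Squad] at hp ⊢
    obtain ⟨⟨ha, hb, hx, hy, he⟩, hr⟩ := hp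
    obtain ⟨z, rfl⟩ : ∃ z, x = z + y := ⟨x - y, by omega⟩
    refine ⟨⟨ha, by omega, by omega, hy, ?_⟩, by omega⟩
    have h2 : z + y - y = z := by omega
    rw [h2, ← he]; ring
  · rintro ⟨a, b, x, y⟩ hp
    simp only [Rab, Rgt, mem_filter, mem_Squad] at hp ⊢
    obtain ⟨⟨ha, hb, hx, hy, he⟩, hr⟩ := hp
    obtain ⟨c, rfl⟩ : ∃ c, b = c + a := ⟨b - a, by omega⟩
    refine ⟨⟨ha, by omega, by omega, hy, ?_⟩, by omega⟩
    have h2 : c + a - a = c := by omega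
    rw [h2, ← he]; ring
  · rintro ⟨a, b, x, y⟩ hp
    simp only [Rgt, mem_filter, mem_Squad] at hp
    obtain ⟨⟨ha, hb, hx, hy, he⟩, hr⟩ := hp
    have h2 : a + b - a = b := by omega
    have h3 : x - y + y = x := by omega
    show (a, a + b - a, x - y + y, y) = (a, b, x, y)
    rw [h2, h3]
  · rintro ⟨a, b, x, y⟩ hp
    simp only [Rab, mem_filter, mem_Squad] at hp
    obtain ⟨⟨ha, hb, hx, hy, he⟩, hr⟩ := hp
    have h2 : a + (b - a) = b := by omega
    have h3 : x + y - y = x := by omega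
    show (a, a + (b - a), x + y - y, y) = (a, b, x, y)
    rw [h2, h3]
  · rintro ⟨a, b, x, y⟩ _; rfl

lemma sum_diag (n : ℕ) (f : ℕ → ℕ → ℕ → ℕ → ℂ) :
    ∑ p ∈ Rdg n, f p.1 p.2.1 p.2.2.1 p.2.2.2
      = ∑ d ∈ n.divisors, ∑ a ∈ Finset.Ico 1 (n / d), f a (n / d - a) d d := by
  rw [← Finset.sum_sigma (n.divisors) (fun d => Finset.Ico 1 (n / d))
    (fun q => f q.2 (n / q.1 - q.2) q.1 q.1)]
  refine Finset.sum_nbij' (fun p => (⟨p.2.2.1, p.1⟩ : Σ _ : ℕ, ℕ))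
    (fun q => (q.2, n / q.1 - q.2, q.1, q.1)) ?_ ?_ ?_ ?_ ?_
  · rintro ⟨a, b, x, y⟩ hp
    simp only [Rdg, mem_filter, mem_Squad] at hp
    obtain ⟨⟨ha, hb, hx, hy, he⟩, hr⟩ := hp
    subst hr
    have hxn : x ∣ n := ⟨a + b, by rw [← he]; ring⟩
    have hn0 : n ≠ 0 := by
      have := Nat.mul_pos ha hx; omega
    have hnd : n / x = a + b := by
      have : n = (a + b) * x := by rw [← he]; ring
      rw [this, Nat.mul_div_cancel _ hx]
    simp only [Finset.mem_sigma, Nat.mem_divisors, Finset.mem_Ico]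
    exact ⟨⟨hxn, hn0⟩, by omega, by omega⟩
  · rintro ⟨d, a⟩ hq
    simp only [Finset.mem_sigma, Nat.mem_divisors, Finset.mem_Ico] at hq
    obtain ⟨⟨hdn, hn0⟩, ha1, ha2⟩ := hq
    have hd0 : 0 < d := Nat.pos_of_dvd_of_pos hdn (Nat.pos_of_ne_zero hn0)
    have hb1 : 0 < a := by omega
    have hb2 : 0 < n / d - a := by omega
    refine Finset.mem_filter.mpr ⟨mem_Squad.mpr ⟨hb1, hb2, hd0, hd0, ?_⟩, rfl⟩
    have : a * d + (n / d - a) * d = (n / d) * d := by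
      rw [← Nat.add_mul]; congr 1; omega
    rw [this, Nat.div_mul_cancel hdn]
  · rintro ⟨a, b, x, y⟩ hp
    simp only [Rdg, mem_filter, mem_Squad] at hp
    obtain ⟨⟨ha, hb, hx, hy, he⟩, hr⟩ := hp
    subst hr
    have hnd : n / x = a + b := by
      have : n = (a + b) * x := by rw [← he]; ring
      rw [this, Nat.mul_div_cancel _ hx]
    show (a, n / x - a, x, x) = (a, b, x, x)
    rw [show n / x - a = b by omega]
  · rintro ⟨d, a⟩ hq; rfl
  · rintro ⟨a, b, x, y⟩ hp
    simp only [Rdg, mem_filter, mem_Squad] at hp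
    obtain ⟨⟨ha, hb, hx, hy, he⟩, hr⟩ := hp
    subst hr
    have hnd : n / x = a + b := by
      have : n = (a + b) * x := by rw [← he]; ring
      rw [this, Nat.mul_div_cancel _ hx]
    show f a b x x = f a (n / x - a) x x
    rw [show n / x - a = b by omega]

noncomputable def Wp (a b x y : ℂ) : ℂ := (24/5)*b*y^5 + (24)*b*x*y^4 + (-48)*b*x^3*y^2 + (-24)*b*x^4*y + (-24)*b^2*x*y^3 + (48)*b^2*x^3*y + (24)*b^2*x^4 + (12)*b^3*x*y^2 + (12)*b^3*x^2*y + (24)*b^4*y^2 + (24)*b^4*x*y + (-24/5)*b^5*y + (-24/5)*a*y^5 + (-48)*a*x*y^4 + (-96)*a*x^2*y^3 + (-48)*a*x^3*y^2 + (96)*a*b*x*y^3 + (216)*a*b*x^2*y^2 + (96)*a*b*x^3*y + (24)*a*b^2*y^3 + (36)*a*b^2*x*y^2 + (24)*a*b^3*y^2 + (48)*a^2*y^4 + (120)*a^2*x*y^3 + (72)*a^2*x^2*y^2 + (12)*a^2*b*y^3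

noncomputable def Up (a b x y : ℂ) : ℂ := (-24)*x^2*y^4 + (24)*x^4*y^2 + (-24)*b*x*y^4 + (12)*b*x^2*y^3 + (48)*b*x^3*y^2 + (-24)*b*x^4*y + (12)*b^2*x*y^3 + (-48)*b^2*x^3*y + (24)*b^4*x*y + (-12)*a*x^3*y^2 + (24/5)*a*x^5 + (-36)*a*b*x^2*y^2 + (12)*a^2*x^3*y

noncomputable def Hp (a b x y : ℂ) : ℂ := (-12)*a*b^3*y^2 + (36)*a^2*b^2*x*y + (-12)*a^3*b*x^2

noncomputable def hC (d m : ℂ) : ℂ := (2/5)*d*m^2 + (2)*d*m^4 + (-12/5)*d*m^5 + (-2)*d^2*m^3 + (12/5)*d^2*m^5 + (-1)*d^3*m^4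

noncomputable def Fc (d m : ℂ) : ℂ := d^4*m^3 - d^3*m^2 + hC d m - hC m d

lemma P1 (a b x y : ℂ) :
    2 * Hp a b x y =
      (Wp y x b a - Wp a (a+b) (x-y) y)
      + ((Up a b x y + Up b a y x) - (Up x b a y + Up y a b x)) := by
  simp only [Hp, Wp, Up]; ring

lemma sC (m : ℕ) (hm : 1 ≤ m) : ∑ a ∈ Finset.Ico 1 m, (1:ℂ) = (m:ℂ) - 1 := by
  induction m, hm using Nat.le_induction with
  | base => norm_num
  | succ m hm ih =>
    rw [Finset.sum_Ico_succ_top (by omega), ih]; push_cast; ring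

lemma sP1 (m : ℕ) (hm : 1 ≤ m) : ∑ a ∈ Finset.Ico 1 m, (a:ℂ) = ((m:ℂ)^2 - m)/2 := by
  induction m, hm using Nat.le_induction with
  | base => norm_num
  | succ m hm ih =>
    rw [Finset.sum_Ico_succ_top (by omega), ih]; push_cast; ring

lemma sP2 (m : ℕ) (hm : 1 ≤ m) :
    ∑ a ∈ Finset.Ico 1 m, (a:ℂ)^2 = (2*(m:ℂ)^3 - 3*(m:ℂ)^2 + m)/6 := by
  induction m, hm using Nat.le_induction with
  | base => norm_num
  | succ m hm ih =>
    rw [Finset.sum_Ico_succ_top (by omega), ih]; push_cast; ring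

lemma sP3 (m : ℕ) (hm : 1 ≤ m) :
    ∑ a ∈ Finset.Ico 1 m, (a:ℂ)^3 = ((m:ℂ)^4 - 2*(m:ℂ)^3 + (m:ℂ)^2)/4 := by
  induction m, hm using Nat.le_induction with
  | base => norm_num
  | succ m hm ih =>
    rw [Finset.sum_Ico_succ_top (by omega), ih]; push_cast; ring

lemma sP4 (m : ℕ) (hm : 1 ≤ m) :
    ∑ a ∈ Finset.Ico 1 m, (a:ℂ)^4 = (6*(m:ℂ)^5 - 15*(m:ℂ)^4 + 10*(m:ℂ)^3 - m)/30 := by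
  induction m, hm using Nat.le_induction with
  | base => norm_num
  | succ m hm ih =>
    rw [Finset.sum_Ico_succ_top (by omega), ih]; push_cast; ring

lemma sP5 (m : ℕ) (hm : 1 ≤ m) :
    ∑ a ∈ Finset.Ico 1 m, (a:ℂ)^5 = (2*(m:ℂ)^6 - 6*(m:ℂ)^5 + 5*(m:ℂ)^4 - (m:ℂ)^2)/12 := by
  induction m, hm using Nat.le_induction with
  | base => norm_num
  | succ m hm ih =>
    rw [Finset.sum_Ico_succ_top (by omega), ih]; push_cast; ring

lemma inner_eval (d m : ℕ) (hm : 1 ≤ m) :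
    ∑ a ∈ Finset.Ico 1 m,
      (Hp a (↑(m - a)) d d + Up d (↑(m - a)) a d - Up a (↑(m - a)) d d) = Fc d m := by
  have step : ∀ a ∈ Finset.Ico 1 m,
      (Hp a (↑(m - a)) d d + Up d (↑(m - a)) a d - Up a (↑(m - a)) d d : ℂ) =
      ((-12)*(m:ℂ)*(d:ℂ)^5 + 36*(m:ℂ)^2*(d:ℂ)^4 + (-24)*(m:ℂ)^4*(d:ℂ)^2) * (1:ℂ)
      + ((96/5)*(d:ℂ)^5 + (-60)*(m:ℂ)*(d:ℂ)^4 + 12*(m:ℂ)^2*(d:ℂ)^3 + 84*(m:ℂ)^3*(d:ℂ)^2 + 24*(m:ℂ)^4*(d:ℂ)) * (a:ℂ)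
      + ((-12)*(d:ℂ)^4 + (-48)*(m:ℂ)*(d:ℂ)^3 + (-72)*(m:ℂ)^2*(d:ℂ)^2 + (-96)*(m:ℂ)^3*(d:ℂ)) * (a:ℂ)^2
      + (36*(d:ℂ)^3 + 24*(m:ℂ)*(d:ℂ)^2 + 96*(m:ℂ)^2*(d:ℂ)) * (a:ℂ)^3
      + (12*(d:ℂ)^2 + (-24)*(m:ℂ)*(d:ℂ)) * (a:ℂ)^4
      + ((24/5)*(d:ℂ)) * (a:ℂ)^5 := by
    intro a ha
    rw [Finset.mem_Ico] at ha
    rw [Nat.cast_sub (by omega : a ≤ m)]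
    simp only [Hp, Up]; ring
  rw [Finset.sum_congr rfl step]
  simp only [Finset.sum_add_distrib, ← Finset.mul_sum]
  rw [sC m hm, sP1 m hm, sP2 m hm, sP3 m hm, sP4 m hm, sP5 m hm]
  simp only [Fc, hC]; ring

theorem key (n : ℕ) :
    ∑ p ∈ Squad n, Hp p.1 p.2.1 p.2.2.1 p.2.2.2
      = (n:ℂ)^2 * ((n:ℂ) - 1) * ∑ d ∈ n.divisors, (d:ℂ) := by
  rcases Nat.eq_zero_or_pos n with rfl | hn
  · have hS : Squad 0 = ∅ := by
      ext p
      simp only [mem_Squad, Finset.notMem_empty, iff_false, not_and]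
      intro ha hb hx hy
      have h1 := Nat.mul_pos ha hx
      exact (Nat.add_pos_left h1 _).ne'
    rw [hS]
    simp
  have hn0 : n ≠ 0 := by omega
  -- abbreviations are spelled out fully in each have
  have e1 : (∑ p ∈ Squad n, Hp p.1 p.2.1 p.2.2.1 p.2.2.2)
      = (∑ p ∈ Rgt n, Hp p.1 p.2.1 p.2.2.1 p.2.2.2)
        + (∑ p ∈ Rdg n, Hp p.1 p.2.1 p.2.2.1 p.2.2.2)
        + (∑ p ∈ Rlt n, Hp p.1 p.2.1 p.2.2.1 p.2.2.2) :=
    sum_split n (fun p => Hp p.1 p.2.1 p.2.2.1 p.2.2.2)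
  have e2 : (∑ p ∈ Rlt n, Hp p.1 p.2.1 p.2.2.1 p.2.2.2)
      = ∑ p ∈ Rgt n, Hp p.2.1 p.1 p.2.2.2 p.2.2.1 :=
    sum_tau n (fun a b x y => Hp a b x y)
  have e3 : (∑ p ∈ Rgt n, Hp p.2.1 p.1 p.2.2.2 p.2.2.1)
      = ∑ p ∈ Rgt n, Hp p.1 p.2.1 p.2.2.1 p.2.2.2 :=
    Finset.sum_congr rfl (fun p _ => by simp only [Hp]; ring)
  have e4 : (∑ p ∈ Rgt n, 2 * Hp p.1 p.2.1 p.2.2.1 p.2.2.2)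
      = 2 * ∑ p ∈ Rgt n, Hp p.1 p.2.1 p.2.2.1 p.2.2.2 :=
    (Finset.mul_sum _ _ _).symm
  have e5 : (∑ p ∈ Rgt n, 2 * Hp p.1 p.2.1 p.2.2.1 p.2.2.2)
      = ∑ p ∈ Rgt n,
        ((Wp p.2.2.2 p.2.2.1 p.2.1 p.1 - Wp p.1 (↑(p.1 + p.2.1)) (↑(p.2.2.1 - p.2.2.2)) p.2.2.2)
          + ((Up p.1 p.2.1 p.2.2.1 p.2.2.2 + Up p.2.1 p.1 p.2.2.2 p.2.2.1)
            - (Up p.2.2.1 p.2.1 p.1 p.2.2.2 + Up p.2.2.2 p.1 p.2.1 p.2.2.1))) := by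
    refine Finset.sum_congr rfl ?_
    rintro ⟨a, b, x, y⟩ hp
    simp only [Rgt, Finset.mem_filter] at hp
    have hyx : y ≤ x := le_of_lt hp.2
    push_cast [Nat.cast_sub hyx]
    exact P1 a b x y
  have e6 : (∑ p ∈ Rgt n,
        ((Wp p.2.2.2 p.2.2.1 p.2.1 p.1 - Wp p.1 (↑(p.1 + p.2.1)) (↑(p.2.2.1 - p.2.2.2)) p.2.2.2)
          + ((Up p.1 p.2.1 p.2.2.1 p.2.2.2 + Up p.2.1 p.1 p.2.2.2 p.2.2.1)
            - (Up p.2.2.1 p.2.1 p.1 p.2.2.2 + Up p.2.2.2 p.1 p.2.1 p.2.2.1))))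
      = ((∑ p ∈ Rgt n, Wp p.2.2.2 p.2.2.1 p.2.1 p.1)
          - (∑ p ∈ Rgt n, Wp p.1 (↑(p.1 + p.2.1)) (↑(p.2.2.1 - p.2.2.2)) p.2.2.2))
        + (((∑ p ∈ Rgt n, Up p.1 p.2.1 p.2.2.1 p.2.2.2)
            + (∑ p ∈ Rgt n, Up p.2.1 p.1 p.2.2.2 p.2.2.1))
          - ((∑ p ∈ Rgt n, Up p.2.2.1 p.2.1 p.1 p.2.2.2)
            + (∑ p ∈ Rgt n, Up p.2.2.2 p.1 p.2.1 p.2.2.1))) := by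
    simp only [Finset.sum_add_distrib, Finset.sum_sub_distrib]
  have e7 : (∑ p ∈ Rab n, Wp p.1 p.2.1 p.2.2.1 p.2.2.2)
      = ∑ p ∈ Rgt n, Wp p.2.2.2 p.2.2.1 p.2.1 p.1 :=
    sum_rho n (fun a b x y => Wp a b x y)
  have e8 : (∑ p ∈ Rgt n, Wp p.1 (↑(p.1 + p.2.1)) (↑(p.2.2.1 - p.2.2.2)) p.2.2.2)
      = ∑ p ∈ Rab n, Wp p.1 p.2.1 p.2.2.1 p.2.2.2 :=
    sum_euclid n (fun a b x y => Wp a b x y)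
  have e9 : (∑ p ∈ Rlt n, Up p.1 p.2.1 p.2.2.1 p.2.2.2)
      = ∑ p ∈ Rgt n, Up p.2.1 p.1 p.2.2.2 p.2.2.1 :=
    sum_tau n (fun a b x y => Up a b x y)
  have e10 : (∑ p ∈ Squad n, Up p.1 p.2.1 p.2.2.1 p.2.2.2)
      = (∑ p ∈ Rgt n, Up p.1 p.2.1 p.2.2.1 p.2.2.2)
        + (∑ p ∈ Rdg n, Up p.1 p.2.1 p.2.2.1 p.2.2.2)
        + (∑ p ∈ Rlt n, Up p.1 p.2.1 p.2.2.1 p.2.2.2) :=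
    sum_split n (fun p => Up p.1 p.2.1 p.2.2.1 p.2.2.2)
  have e11 : (∑ p ∈ Rlt n, Up p.2.2.1 p.2.1 p.1 p.2.2.2)
      = ∑ p ∈ Rgt n, Up p.2.2.2 p.1 p.2.1 p.2.2.1 :=
    sum_tau n (fun a b x y => Up x b a y)
  have e12 : (∑ p ∈ Squad n, Up p.2.2.1 p.2.1 p.1 p.2.2.2)
      = (∑ p ∈ Rgt n, Up p.2.2.1 p.2.1 p.1 p.2.2.2)
        + (∑ p ∈ Rdg n, Up p.2.2.1 p.2.1 p.1 p.2.2.2)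
        + (∑ p ∈ Rlt n, Up p.2.2.1 p.2.1 p.1 p.2.2.2) :=
    sum_split n (fun p => Up p.2.2.1 p.2.1 p.1 p.2.2.2)
  have e13 : (∑ p ∈ Squad n, Up p.2.2.1 p.2.1 p.1 p.2.2.2)
      = ∑ p ∈ Squad n, Up p.1 p.2.1 p.2.2.1 p.2.2.2 :=
    sum_s1 n (fun a b x y => Up a b x y)
  have e14 : (∑ p ∈ Rdg n,
        (Hp p.1 p.2.1 p.2.2.1 p.2.2.2 + Up p.2.2.1 p.2.1 p.1 p.2.2.2
          - Up p.1 p.2.1 p.2.2.1 p.2.2.2))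
      = (∑ p ∈ Rdg n, Hp p.1 p.2.1 p.2.2.1 p.2.2.2)
        + (∑ p ∈ Rdg n, Up p.2.2.1 p.2.1 p.1 p.2.2.2)
        - (∑ p ∈ Rdg n, Up p.1 p.2.1 p.2.2.1 p.2.2.2) := by
    simp only [Finset.sum_add_distrib, Finset.sum_sub_distrib]
  have e15 : (∑ p ∈ Rdg n,
        (Hp p.1 p.2.1 p.2.2.1 p.2.2.2 + Up p.2.2.1 p.2.1 p.1 p.2.2.2
          - Up p.1 p.2.1 p.2.2.1 p.2.2.2))
      = ∑ d ∈ n.divisors, ∑ a ∈ Finset.Ico 1 (n / d),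
          (Hp a (↑(n / d - a)) d d + Up d (↑(n / d - a)) a d - Up a (↑(n / d - a)) d d) :=
    sum_diag n (fun a b x y => Hp a b x y + Up x b a y - Up a b x y)
  have e16 : (∑ d ∈ n.divisors, ∑ a ∈ Finset.Ico 1 (n / d),
        (Hp a (↑(n / d - a)) d d + Up d (↑(n / d - a)) a d - Up a (↑(n / d - a)) d d))
      = ∑ d ∈ n.divisors, Fc d (↑(n / d)) := by
    refine Finset.sum_congr rfl ?_
    intro d hd
    rw [Nat.mem_divisors] at hd
    have hd0 : 0 < d := Nat.pos_of_dvd_of_pos hd.1 hn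
    exact inner_eval d (n / d) (Nat.div_pos (Nat.le_of_dvd hn hd.1) hd0)
  have e17 : (∑ d ∈ n.divisors, Fc d (↑(n / d)))
      = (n:ℂ)^2 * ((n:ℂ) - 1) * ∑ d ∈ n.divisors, (d:ℂ) := by
    have flip : (∑ d ∈ n.divisors, hC (↑(n / d)) d) = ∑ d ∈ n.divisors, hC d (↑(n / d)) := by
      have h0 := Nat.sum_div_divisors n (fun e => hC e (↑(n / e)))
      calc (∑ d ∈ n.divisors, hC (↑(n / d)) d)
          = ∑ d ∈ n.divisors, hC (↑(n / d)) (↑(n / (n / d))) := by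
            refine Finset.sum_congr rfl ?_
            intro d hd
            rw [Nat.mem_divisors] at hd
            rw [Nat.div_div_self hd.1 hn0]
        _ = ∑ d ∈ n.divisors, hC d (↑(n / d)) := h0
    have main : (∑ d ∈ n.divisors, Fc d (↑(n / d)))
        = ∑ d ∈ n.divisors, ((n:ℂ)^2 * ((n:ℂ) - 1) * d + (hC d (↑(n / d)) - hC (↑(n / d)) d)) := by
      refine Finset.sum_congr rfl ?_
      intro d hd
      rw [Nat.mem_divisors] at hd
      have hdm : (d:ℂ) * ((n / d : ℕ):ℂ) = (n:ℂ) := by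
        rw [← Nat.cast_mul, Nat.mul_div_cancel' hd.1]
      simp only [Fc]
      rw [← hdm]
      ring
    rw [main, Finset.sum_add_distrib, Finset.sum_sub_distrib, flip, ← Finset.mul_sum]
    ring
  -- assemble
  have hBB : (∑ p ∈ Rgt n, Up p.1 p.2.1 p.2.2.1 p.2.2.2)
      + (∑ p ∈ Rgt n, Up p.2.1 p.1 p.2.2.2 p.2.2.1)
      = (∑ p ∈ Squad n, Up p.1 p.2.1 p.2.2.1 p.2.2.2)
        - (∑ p ∈ Rdg n, Up p.1 p.2.1 p.2.2.1 p.2.2.2) := by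
    linear_combination -e10 - e9
  have hCC : (∑ p ∈ Rgt n, Up p.2.2.1 p.2.1 p.1 p.2.2.2)
      + (∑ p ∈ Rgt n, Up p.2.2.2 p.1 p.2.1 p.2.2.1)
      = (∑ p ∈ Squad n, Up p.1 p.2.1 p.2.2.1 p.2.2.2)
        - (∑ p ∈ Rdg n, Up p.2.2.1 p.2.1 p.1 p.2.2.2) := by
    linear_combination -e12 - e11 + e13
  have h2G : 2 * (∑ p ∈ Rgt n, Hp p.1 p.2.1 p.2.2.1 p.2.2.2)
      = (∑ p ∈ Rdg n, Up p.2.2.1 p.2.1 p.1 p.2.2.2)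
        - (∑ p ∈ Rdg n, Up p.1 p.2.1 p.2.2.1 p.2.2.2) := by
    linear_combination -e4 + e5 + e6 - e7 - e8 + hBB - hCC
  linear_combination e1 + e2 + e3 + h2G - e14 + e15 + e16 + e17

lemma sum_Squad_conv (n : ℕ) (f : ℕ → ℕ → ℕ → ℕ → ℂ) :
    ∑ p ∈ Squad n, f p.1 p.2.1 p.2.2.1 p.2.2.2
      = ∑ k ∈ Finset.Ico 1 n, ∑ q ∈ k.divisors ×ˢ (n - k).divisors,
          f q.1 q.2 (k / q.1) ((n - k) / q.2) := by
  rw [← Finset.sum_sigma (Finset.Ico 1 n) (fun k => k.divisors ×ˢ (n - k).divisors)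
    (fun t => f t.2.1 t.2.2 (t.1 / t.2.1) ((n - t.1) / t.2.2))]
  refine Finset.sum_nbij' (fun p => (⟨p.1 * p.2.2.1, (p.1, p.2.1)⟩ : Σ _ : ℕ, ℕ × ℕ))
    (fun t => (t.2.1, t.2.2, t.1 / t.2.1, (n - t.1) / t.2.2)) ?_ ?_ ?_ ?_ ?_
  · rintro ⟨a, b, x, y⟩ hp
    dsimp only
    simp only [mem_Squad] at hp
    obtain ⟨ha, hb, hx, hy, he⟩ := hp
    have h1 := Nat.mul_pos ha hx
    have h2 := Nat.mul_pos hb hy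
    simp only [Finset.mem_sigma, Finset.mem_Ico, Finset.mem_product, Nat.mem_divisors]
    refine ⟨⟨by omega, by omega⟩, ⟨dvd_mul_right a x, by omega⟩, ?_⟩
    rw [show n - a * x = b * y by omega]
    exact ⟨dvd_mul_right b y, by omega⟩
  · rintro ⟨k, d, e⟩ ht
    dsimp only
    simp only [Finset.mem_sigma, Finset.mem_Ico, Finset.mem_product, Nat.mem_divisors] at ht
    obtain ⟨⟨hk1, hk2⟩, ⟨hdk, hk0⟩, hde, hnk0⟩ := ht
    have hd0 : 0 < d := Nat.pos_of_dvd_of_pos hdk (by omega)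
    have he0 : 0 < e := Nat.pos_of_dvd_of_pos hde (by omega)
    rw [mem_Squad]
    refine ⟨hd0, he0, Nat.div_pos (Nat.le_of_dvd (by omega) hdk) hd0,
      Nat.div_pos (Nat.le_of_dvd (by omega) hde) he0, ?_⟩
    rw [Nat.mul_div_cancel' hdk, Nat.mul_div_cancel' hde]
    omega
  · rintro ⟨a, b, x, y⟩ hp
    dsimp only
    simp only [mem_Squad] at hp
    obtain ⟨ha, hb, hx, hy, he⟩ := hp
    show (a, b, a * x / a, (n - a * x) / b) = (a, b, x, y)
    rw [Nat.mul_div_cancel_left x ha, show n - a * x = b * y by omega,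
      Nat.mul_div_cancel_left y hb]
  · rintro ⟨k, d, e⟩ ht
    dsimp only
    simp only [Finset.mem_sigma, Finset.mem_Ico, Finset.mem_product, Nat.mem_divisors] at ht
    obtain ⟨⟨hk1, hk2⟩, ⟨hdk, hk0⟩, hde, hnk0⟩ := ht
    show (⟨d * (k / d), (d, e)⟩ : Σ _ : ℕ, ℕ × ℕ) = ⟨k, (d, e)⟩
    rw [Nat.mul_div_cancel' hdk]
  · rintro ⟨a, b, x, y⟩ hp
    dsimp only
    simp only [mem_Squad] at hp
    obtain ⟨ha, hb, hx, hy, he⟩ := hp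
    show f a b x y = f a b (a * x / a) ((n - a * x) / b)
    rw [Nat.mul_div_cancel_left x ha, show n - a * x = b * y by omega,
      Nat.mul_div_cancel_left y hb]

noncomputable def sigC (k : ℕ) : ℂ := ∑ d ∈ k.divisors, (d:ℂ)

lemma arith (n : ℕ) :
    ∑ k ∈ Finset.Ico 1 n,
        (36*(k:ℂ)*((n - k : ℕ):ℂ) - 12*(k:ℂ)^2 - 12*((n - k : ℕ):ℂ)^2)
          * (sigC k * sigC (n - k))
      = (n:ℂ)^2*((n:ℂ) - 1) * sigC n := by
  have h1 := sum_Squad_conv n (fun a b x y => Hp a b x y)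
  have h2 : (∑ k ∈ Finset.Ico 1 n, ∑ q ∈ k.divisors ×ˢ (n - k).divisors,
        Hp q.1 q.2 (↑(k / q.1)) (↑((n - k) / q.2)))
      = ∑ k ∈ Finset.Ico 1 n,
          (36*(k:ℂ)*((n - k : ℕ):ℂ) - 12*(k:ℂ)^2 - 12*((n - k : ℕ):ℂ)^2)
            * (sigC k * sigC (n - k)) := by
    refine Finset.sum_congr rfl ?_
    intro k _
    rw [Finset.sum_product, sigC, sigC, Finset.sum_mul_sum, Finset.mul_sum]
    refine Finset.sum_congr rfl ?_
    intro d hd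
    rw [Finset.mul_sum]
    refine Finset.sum_congr rfl ?_
    intro e he
    rw [Nat.mem_divisors] at hd he
    have hdk : (d:ℂ) * ((k / d : ℕ):ℂ) = (k:ℂ) := by
      rw [← Nat.cast_mul, Nat.mul_div_cancel' hd.1]
    have hee : (e:ℂ) * (((n - k) / e : ℕ):ℂ) = ((n - k : ℕ):ℂ) := by
      rw [← Nat.cast_mul, Nat.mul_div_cancel' he.1]
    rw [← hdk, ← hee]
    simp only [Hp]
    ring
  simp only [sigC] at h2 ⊢
  linear_combination -h1 - h2 + key n

lemma coeff_theta (k : ℕ) (g : PowerSeries ℂ) :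
    PowerSeries.coeff k (theta g) = (k:ℂ) * PowerSeries.coeff k g := by
  simp [theta, PowerSeries.coeff_mk]

lemma antid_split (n : ℕ) (hn : 1 ≤ n) (F : ℕ → ℕ → ℂ) :
    ∑ p ∈ Finset.HasAntidiagonal.antidiagonal n, F p.1 p.2
      = F 0 n + (∑ k ∈ Finset.Ico 1 n, F k (n - k)) + F n 0 := by
  rw [Finset.Nat.sum_antidiagonal_eq_sum_range_succ_mk (fun p => F p.1 p.2) n]
  dsimp only
  rw [Finset.range_eq_Ico, Finset.sum_eq_sum_Ico_succ_bot (by omega) (fun k => F k (n - k)),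
    Finset.sum_Ico_succ_top (by omega : 1 ≤ n) (fun k => F k (n - k)),
    Nat.sub_zero, Nat.sub_self]
  ring

lemma reflectIco (n : ℕ) (F : ℕ → ℕ → ℂ) :
    ∑ k ∈ Finset.Ico 1 n, F k (n - k) = ∑ k ∈ Finset.Ico 1 n, F (n - k) k := by
  refine Finset.sum_nbij' (fun k => n - k) (fun k => n - k) ?_ ?_ ?_ ?_ ?_
  · intro k hk; simp only [Finset.mem_Ico] at hk ⊢; omega
  · intro k hk; simp only [Finset.mem_Ico] at hk ⊢; omega
  · intro k hk; simp only [Finset.mem_Ico] at hk; show n - (n - k) = k; omega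
  · intro k hk; simp only [Finset.mem_Ico] at hk; show n - (n - k) = k; omega
  · intro k hk
    simp only [Finset.mem_Ico] at hk
    show F k (n - k) = F (n - (n - k)) (n - k)
    rw [show n - (n - k) = k by omega]

theorem chazy_aux (f : PowerSeries ℂ)
    (hf : 2 * theta (theta (theta f)) - 2 * f * theta (theta f)
        + 3 * (theta f) ^ 2 = 0)
    (h0 : PowerSeries.coeff 0 f = 1)
    (h1 : PowerSeries.coeff 1 f = -24) :
    ∀ n : ℕ, 1 ≤ n →
      PowerSeries.coeff n f = -24 * ∑ d ∈ n.divisors, (d : ℂ) := by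
  have hrec : ∀ N : ℕ,
      ((N:ℂ) * ((N:ℂ) * ((N:ℂ) * PowerSeries.coeff N f))
        + (N:ℂ) * ((N:ℂ) * ((N:ℂ) * PowerSeries.coeff N f)))
      - ((∑ p ∈ Finset.HasAntidiagonal.antidiagonal N,
            PowerSeries.coeff p.1 f * ((p.2:ℂ) * ((p.2:ℂ) * PowerSeries.coeff p.2 f)))
        + (∑ p ∈ Finset.HasAntidiagonal.antidiagonal N,
            PowerSeries.coeff p.1 f * ((p.2:ℂ) * ((p.2:ℂ) * PowerSeries.coeff p.2 f))))
      + ((∑ p ∈ Finset.HasAntidiagonal.antidiagonal N,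
            ((p.1:ℂ) * PowerSeries.coeff p.1 f) * ((p.2:ℂ) * PowerSeries.coeff p.2 f))
        + (∑ p ∈ Finset.HasAntidiagonal.antidiagonal N,
            ((p.1:ℂ) * PowerSeries.coeff p.1 f) * ((p.2:ℂ) * PowerSeries.coeff p.2 f))
        + (∑ p ∈ Finset.HasAntidiagonal.antidiagonal N,
            ((p.1:ℂ) * PowerSeries.coeff p.1 f) * ((p.2:ℂ) * PowerSeries.coeff p.2 f)))
      = 0 := by
    intro N
    have hf' : theta (theta (theta f)) + theta (theta (theta f))
        - (f * theta (theta f) + f * theta (theta f))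
        + ((theta f) * (theta f) + (theta f) * (theta f) + (theta f) * (theta f)) = 0 := by
      rw [← hf]; ring
    have h := congrArg (PowerSeries.coeff N) hf'
    simp only [map_add, map_sub, map_zero, PowerSeries.coeff_mul, coeff_theta] at h
    exact h
  intro n
  induction n using Nat.strong_induction_on with
  | _ n IH =>
  intro hn
  by_cases hn1 : n = 1
  · subst hn1
    rw [h1, Nat.divisors_one]
    simp
  have hn2 : 2 ≤ n := by omega
  -- split the two antidiagonal sums
  have hspl1 := antid_split n hn
    (fun i j => PowerSeries.coeff i f * ((j:ℂ) * ((j:ℂ) * PowerSeries.coeff j f)))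
  have hspl2 := antid_split n hn
    (fun i j => ((i:ℂ) * PowerSeries.coeff i f) * ((j:ℂ) * PowerSeries.coeff j f))
  push_cast at hspl1 hspl2
  -- rewrite the middle sums using the induction hypothesis
  have hconv1 : (∑ k ∈ Finset.Ico 1 n,
        PowerSeries.coeff k f * (((n - k : ℕ):ℂ) * (((n - k : ℕ):ℂ) * PowerSeries.coeff (n - k) f)))
      = 576 * ∑ k ∈ Finset.Ico 1 n,
          (∑ d ∈ k.divisors, (d:ℂ)) * (∑ e ∈ (n - k).divisors, (e:ℂ)) * ((n - k : ℕ):ℂ)^2 := by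
    rw [Finset.mul_sum]
    refine Finset.sum_congr rfl ?_
    intro k hk
    rw [Finset.mem_Ico] at hk
    rw [IH k (by omega) (by omega), IH (n - k) (by omega) (by omega)]
    ring
  have hconv2 : (∑ k ∈ Finset.Ico 1 n,
        ((k:ℂ) * PowerSeries.coeff k f) * (((n - k : ℕ):ℂ) * PowerSeries.coeff (n - k) f))
      = 576 * ∑ k ∈ Finset.Ico 1 n,
          (∑ d ∈ k.divisors, (d:ℂ)) * (∑ e ∈ (n - k).divisors, (e:ℂ)) * ((k:ℂ) * ((n - k : ℕ):ℂ)) := by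
    rw [Finset.mul_sum]
    refine Finset.sum_congr rfl ?_
    intro k hk
    rw [Finset.mem_Ico] at hk
    rw [IH k (by omega) (by omega), IH (n - k) (by omega) (by omega)]
    ring
  -- reflection: SA = SB
  have hrefl : (∑ k ∈ Finset.Ico 1 n,
        (∑ d ∈ k.divisors, (d:ℂ)) * (∑ e ∈ (n - k).divisors, (e:ℂ)) * ((n - k : ℕ):ℂ)^2)
      = ∑ k ∈ Finset.Ico 1 n,
        (∑ d ∈ k.divisors, (d:ℂ)) * (∑ e ∈ (n - k).divisors, (e:ℂ)) * ((k:ℂ))^2 := by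
    rw [reflectIco n (fun i j => (∑ d ∈ i.divisors, (d:ℂ)) * (∑ e ∈ j.divisors, (e:ℂ)) * ((j:ℂ))^2)]
    refine Finset.sum_congr rfl ?_
    intro k _
    ring
  -- the arithmetic identity, in expanded form
  have harith : (∑ k ∈ Finset.Ico 1 n,
        (36*(k:ℂ)*((n - k : ℕ):ℂ) - 12*(k:ℂ)^2 - 12*((n - k : ℕ):ℂ)^2)
          * ((∑ d ∈ k.divisors, (d:ℂ)) * (∑ e ∈ (n - k).divisors, (e:ℂ))))
      = (n:ℂ)^2*((n:ℂ) - 1) * ∑ d ∈ n.divisors, (d:ℂ) := by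
    have h := arith n
    simp only [sigC] at h
    exact h
  have hptw : (∑ k ∈ Finset.Ico 1 n,
        (36*(k:ℂ)*((n - k : ℕ):ℂ) - 12*(k:ℂ)^2 - 12*((n - k : ℕ):ℂ)^2)
          * ((∑ d ∈ k.divisors, (d:ℂ)) * (∑ e ∈ (n - k).divisors, (e:ℂ))))
      = ∑ k ∈ Finset.Ico 1 n,
          (36 * ((∑ d ∈ k.divisors, (d:ℂ)) * (∑ e ∈ (n - k).divisors, (e:ℂ)) * ((k:ℂ) * ((n - k : ℕ):ℂ)))
            - 12 * ((∑ d ∈ k.divisors, (d:ℂ)) * (∑ e ∈ (n - k).divisors, (e:ℂ)) * ((k:ℂ))^2)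
            - 12 * ((∑ d ∈ k.divisors, (d:ℂ)) * (∑ e ∈ (n - k).divisors, (e:ℂ)) * ((n - k : ℕ):ℂ)^2)) :=
    Finset.sum_congr rfl (fun k _ => by ring)
  have hcomb : (∑ k ∈ Finset.Ico 1 n,
        (36 * ((∑ d ∈ k.divisors, (d:ℂ)) * (∑ e ∈ (n - k).divisors, (e:ℂ)) * ((k:ℂ) * ((n - k : ℕ):ℂ)))
          - 12 * ((∑ d ∈ k.divisors, (d:ℂ)) * (∑ e ∈ (n - k).divisors, (e:ℂ)) * ((k:ℂ))^2)
          - 12 * ((∑ d ∈ k.divisors, (d:ℂ)) * (∑ e ∈ (n - k).divisors, (e:ℂ)) * ((n - k : ℕ):ℂ)^2)))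
      = (∑ k ∈ Finset.Ico 1 n,
          36 * ((∑ d ∈ k.divisors, (d:ℂ)) * (∑ e ∈ (n - k).divisors, (e:ℂ)) * ((k:ℂ) * ((n - k : ℕ):ℂ))))
        - (∑ k ∈ Finset.Ico 1 n,
          12 * ((∑ d ∈ k.divisors, (d:ℂ)) * (∑ e ∈ (n - k).divisors, (e:ℂ)) * ((k:ℂ))^2))
        - (∑ k ∈ Finset.Ico 1 n,
          12 * ((∑ d ∈ k.divisors, (d:ℂ)) * (∑ e ∈ (n - k).divisors, (e:ℂ)) * ((n - k : ℕ):ℂ)^2)) := by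
    rw [Finset.sum_sub_distrib, Finset.sum_sub_distrib]
  have m1 : (36:ℂ) * (∑ k ∈ Finset.Ico 1 n,
        (∑ d ∈ k.divisors, (d:ℂ)) * (∑ e ∈ (n - k).divisors, (e:ℂ)) * ((k:ℂ) * ((n - k : ℕ):ℂ)))
      = ∑ k ∈ Finset.Ico 1 n,
          36 * ((∑ d ∈ k.divisors, (d:ℂ)) * (∑ e ∈ (n - k).divisors, (e:ℂ)) * ((k:ℂ) * ((n - k : ℕ):ℂ))) :=
    Finset.mul_sum _ _ _
  have m2 : (12:ℂ) * (∑ k ∈ Finset.Ico 1 n,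
        (∑ d ∈ k.divisors, (d:ℂ)) * (∑ e ∈ (n - k).divisors, (e:ℂ)) * ((k:ℂ))^2)
      = ∑ k ∈ Finset.Ico 1 n,
          12 * ((∑ d ∈ k.divisors, (d:ℂ)) * (∑ e ∈ (n - k).divisors, (e:ℂ)) * ((k:ℂ))^2) :=
    Finset.mul_sum _ _ _
  have m3 : (12:ℂ) * (∑ k ∈ Finset.Ico 1 n,
        (∑ d ∈ k.divisors, (d:ℂ)) * (∑ e ∈ (n - k).divisors, (e:ℂ)) * ((n - k : ℕ):ℂ)^2)
      = ∑ k ∈ Finset.Ico 1 n,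
          12 * ((∑ d ∈ k.divisors, (d:ℂ)) * (∑ e ∈ (n - k).divisors, (e:ℂ)) * ((n - k : ℕ):ℂ)^2) :=
    Finset.mul_sum _ _ _
  have hkey2 : 36 * (∑ k ∈ Finset.Ico 1 n,
        (∑ d ∈ k.divisors, (d:ℂ)) * (∑ e ∈ (n - k).divisors, (e:ℂ)) * ((k:ℂ) * ((n - k : ℕ):ℂ)))
      - 12 * (∑ k ∈ Finset.Ico 1 n,
        (∑ d ∈ k.divisors, (d:ℂ)) * (∑ e ∈ (n - k).divisors, (e:ℂ)) * ((k:ℂ))^2)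
      - 12 * (∑ k ∈ Finset.Ico 1 n,
        (∑ d ∈ k.divisors, (d:ℂ)) * (∑ e ∈ (n - k).divisors, (e:ℂ)) * ((n - k : ℕ):ℂ)^2)
      = (n:ℂ)^2*((n:ℂ) - 1) * ∑ d ∈ n.divisors, (d:ℂ) := by
    linear_combination harith - hptw - hcomb + m1 - m2 - m3
  -- put everything together
  have hR := hrec n
  have hT1 : (∑ p ∈ Finset.HasAntidiagonal.antidiagonal n,
        PowerSeries.coeff p.1 f * ((p.2:ℂ) * ((p.2:ℂ) * PowerSeries.coeff p.2 f)))
      = (n:ℂ)^2 * PowerSeries.coeff n f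
        + 576 * ∑ k ∈ Finset.Ico 1 n,
            (∑ d ∈ k.divisors, (d:ℂ)) * (∑ e ∈ (n - k).divisors, (e:ℂ)) * ((n - k : ℕ):ℂ)^2 := by
    linear_combination hspl1 + hconv1 + ((n:ℂ) * ((n:ℂ) * PowerSeries.coeff n f)) * h0
  have hT2 : (∑ p ∈ Finset.HasAntidiagonal.antidiagonal n,
        ((p.1:ℂ) * PowerSeries.coeff p.1 f) * ((p.2:ℂ) * PowerSeries.coeff p.2 f))
      = 576 * ∑ k ∈ Finset.Ico 1 n,
          (∑ d ∈ k.divisors, (d:ℂ)) * (∑ e ∈ (n - k).divisors, (e:ℂ)) * ((k:ℂ) * ((n - k : ℕ):ℂ)) := by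
    linear_combination hspl2 + hconv2
  have hne : (2:ℂ) * (n:ℂ)^2 * ((n:ℂ) - 1) ≠ 0 := by
    have hnn : (n:ℂ) ≠ 0 := Nat.cast_ne_zero.mpr (by omega)
    have hn1' : (n:ℂ) ≠ 1 := by exact_mod_cast (show n ≠ 1 by omega)
    have hsub : (n:ℂ) - 1 ≠ 0 := sub_ne_zero.mpr hn1'
    exact mul_ne_zero (mul_ne_zero two_ne_zero (pow_ne_zero 2 hnn)) hsub
  have hfin : (2:ℂ) * (n:ℂ)^2 * ((n:ℂ) - 1) * PowerSeries.coeff n f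
      = (2:ℂ) * (n:ℂ)^2 * ((n:ℂ) - 1) * (-24 * ∑ d ∈ n.divisors, (d:ℂ)) := by
    linear_combination hR + 2 * hT1 - 3 * hT2 - 48 * hkey2 + 576 * hrefl
  exact mul_left_cancel₀ hne hfin

/-- **The normalized power series solution of the Chazy equation is `E₂`.**
If `f ∈ ℂ[[q]]` satisfies `2θ³f − 2f·θ²f + 3(θf)² = 0` with `f(0) = 1` and the
coefficient of `q` equal to `−24`, then the coefficient of `qⁿ` in `f` equals
`−24·σ₁(n)` for all `n ≥ 1`, where `σ₁(n) = Σ_{d∣n} d`. -/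
theorem chazy_normalized_solution_is_E2 (f : PowerSeries ℂ)
    (hf : 2 * theta (theta (theta f)) - 2 * f * theta (theta f)
        + 3 * (theta f) ^ 2 = 0)
    (h0 : PowerSeries.coeff 0 f = 1)
    (h1 : PowerSeries.coeff 1 f = -24) :
    ∀ n : ℕ, 1 ≤ n →
      PowerSeries.coeff n f = -24 * ∑ d ∈ n.divisors, (d : ℂ) := by
  exact chazy_aux f hf h0 h1
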